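/- If A is an n×m matrix with unit-norm columns satisfying the URP, and s ∈ null(A) has at most n elements with absolute value greater than α, then ‖s‖ < (M+1)·m·α, where M is the maximum norm of left inverses of submatrices of A with at most n columns. -/

import Mathlib

open Matrix Finset Filter

noncomputable def vnorm {k : ℕ} (s : Fin k → ℝ) : ℝ := Real.sqrt (∑ i, (s i)^2)

noncomputable def mnorm {p q : ℕ} (L : Matrix (Fin p) (Fin q) ℝ) : ℝ :=
  Real.sqrt (∑ i, ∑ j, (L i j)^2)

def URP {n m : ℕ} (A : Matrix (Fin n) (Fin m) ℝ) : Prop :=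
  ∀ g : Fin n → Fin m, Function.Injective g → (A.submatrix id g).det ≠ 0

def UnitCols {n m : ℕ} (A : Matrix (Fin n) (Fin m) ℝ) : Prop :=
  ∀ j, vnorm (fun i => A i j) = 1

def LeftInvBound {n m : ℕ} (A : Matrix (Fin n) (Fin m) ℝ) (M : ℝ) : Prop :=
  ∀ (k : ℕ), k ≤ n → ∀ g : Fin k → Fin m, Function.Injective g →
    ∃ L : Matrix (Fin k) (Fin n) ℝ, L * A.submatrix id g = 1 ∧ mnorm L ≤ M

/-! Let `T` be the set of at most `n` indices where `|s i| > α`, and split `s = t + y` with `t`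
supported on `T`. Then `A t = -A y`, so applying a left inverse `L` of the columns of `A` indexed
by `T` gives `‖t‖ ≤ ‖L‖ ‖A y‖ ≤ M · m α`, since the columns have unit norm and `|y i| ≤ α`.
Together with `‖y‖ ≤ √m α < m α` (as `m > n ≥ 1`) this yields `‖s‖ < (M + 1) m α`. -/

lemma vnorm_eq_norm {k : ℕ} (s : Fin k → ℝ) : vnorm s = ‖WithLp.toLp 2 s‖ := by
  simp [vnorm, EuclideanSpace.norm_eq]

lemma vnorm_nonneg {k : ℕ} (s : Fin k → ℝ) : 0 ≤ vnorm s := Real.sqrt_nonneg _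

lemma vnorm_add_le {k : ℕ} (a b : Fin k → ℝ) : vnorm (a + b) ≤ vnorm a + vnorm b := by
  simpa only [vnorm_eq_norm, WithLp.toLp_add] using norm_add_le _ _

lemma vnorm_neg {k : ℕ} (a : Fin k → ℝ) : vnorm (-a) = vnorm a := by
  simp [vnorm]

lemma vnorm_le_sqrt_mul {k : ℕ} {y : Fin k → ℝ} {α : ℝ} (hα : 0 ≤ α) (hy : ∀ j, |y j| ≤ α) :
    vnorm y ≤ √k * α := by
  have hsum : ∑ j, y j ^ 2 ≤ k * α ^ 2 := by
    simpa using Finset.sum_le_card_nsmul univ (fun j => y j ^ 2) (α ^ 2)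
      fun j _ => sq_le_sq' (neg_le_of_abs_le (hy j)) (le_of_abs_le (hy j))
  calc vnorm y ≤ √(k * α ^ 2) := Real.sqrt_le_sqrt hsum
    _ = √k * α := by rw [Real.sqrt_mul k.cast_nonneg, Real.sqrt_sq hα]

lemma vnorm_mulVec_le_mnorm_mul {p q : ℕ} (L : Matrix (Fin p) (Fin q) ℝ) (x : Fin q → ℝ) :
    vnorm (L *ᵥ x) ≤ mnorm L * vnorm x := by
  rw [vnorm, vnorm, mnorm, ← Real.sqrt_mul (by positivity), Finset.sum_mul]
  exact Real.sqrt_le_sqrt <| Finset.sum_le_sum fun i _ =>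
    Finset.sum_mul_sq_le_sq_mul_sq univ (L i) x

lemma vnorm_mulVec_le_sum_abs {n m : ℕ} {A : Matrix (Fin n) (Fin m) ℝ} (hcols : UnitCols A)
    (y : Fin m → ℝ) : vnorm (A *ᵥ y) ≤ ∑ j, |y j| := by
  have hcol : A *ᵥ y = ∑ j, y j • (fun i => A i j) := by
    ext i
    simp [mulVec, dotProduct, mul_comm]
  rw [vnorm_eq_norm, hcol, WithLp.toLp_sum]
  refine (norm_sum_le _ _).trans_eq (Finset.sum_congr rfl fun j _ => ?_)
  rw [WithLp.toLp_smul, norm_smul, ← vnorm_eq_norm, hcols, Real.norm_eq_abs, mul_one]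

lemma UnitCols.pos_rows {n m : ℕ} {A : Matrix (Fin n) (Fin m) ℝ} (hcols : UnitCols A)
    (j : Fin m) : 0 < n := by
  rcases Nat.eq_zero_or_pos n with rfl | hn
  · simpa [vnorm] using hcols j
  · exact hn

lemma LeftInvBound.nonneg {n m : ℕ} {A : Matrix (Fin n) (Fin m) ℝ} {M : ℝ}
    (hM : LeftInvBound A M) : 0 ≤ M := by
  obtain ⟨L, -, hL⟩ := hM 0 n.zero_le Fin.elim0 fun i => i.elim0
  exact (Real.sqrt_nonneg _).trans hL

section Indicator

variable {ι κ : Type*} [Fintype ι] [Fintype κ] {g : κ → ι}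

lemma sum_indicator_range {M : Type*} [AddCommMonoid M] (hg : Function.Injective g)
    (f : ι → M) :
    ∑ j, (Set.range g).indicator f j = ∑ i, f (g i) := by
  classical
  have hrange : Set.range g = ↑(univ.image g) := by simp
  rw [hrange, Finset.sum_indicator_subset f (Finset.subset_univ _),
    Finset.sum_image fun a _ b _ h => hg h]

lemma mulVec_indicator_range {ρ R : Type*} [NonUnitalNonAssocSemiring R]
    (hg : Function.Injective g) (A : Matrix ρ ι R) (s : ι → R) :
    A *ᵥ (Set.range g).indicator s = A.submatrix id g *ᵥ (s ∘ g) := by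
  ext r
  simp only [mulVec, dotProduct, ← Set.indicator_mul_right, sum_indicator_range hg]
  rfl

end Indicator

lemma vnorm_indicator_range {k m : ℕ} {g : Fin k → Fin m} (hg : Function.Injective g)
    (s : Fin m → ℝ) :
    vnorm ((Set.range g).indicator s) = vnorm (s ∘ g) := by
  simp only [vnorm, Function.comp_apply, ← sum_indicator_range hg fun j => s j ^ 2]
  congr 1
  refine Finset.sum_congr rfl fun j _ => ?_
  by_cases hj : j ∈ Set.range g <;> simp [hj]

lemma vnorm_comp_le_of_mulVec_eq_zero {n m k : ℕ} {A : Matrix (Fin n) (Fin m) ℝ}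
    {s : Fin m → ℝ} (hs : A *ᵥ s = 0) {g : Fin k → Fin m} (hg : Function.Injective g)
    {L : Matrix (Fin k) (Fin n) ℝ} (hL : L * A.submatrix id g = 1) :
    vnorm (s ∘ g) ≤ mnorm L * vnorm (A *ᵥ (Set.range g)ᶜ.indicator s) := by
  have hsplit : A *ᵥ (Set.range g).indicator s = -(A *ᵥ (Set.range g)ᶜ.indicator s) := by
    rw [eq_neg_iff_add_eq_zero, ← mulVec_add, Set.indicator_self_add_compl, hs]
  calc vnorm (s ∘ g) = vnorm (L *ᵥ (A.submatrix id g *ᵥ (s ∘ g))) := by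
        rw [mulVec_mulVec, hL, one_mulVec]
    _ = vnorm (L *ᵥ (A *ᵥ (Set.range g)ᶜ.indicator s)) := by
        rw [← mulVec_indicator_range hg, hsplit, mulVec_neg, vnorm_neg]
    _ ≤ mnorm L * vnorm (A *ᵥ (Set.range g)ᶜ.indicator s) := vnorm_mulVec_le_mnorm_mul _ _

theorem stmt1_general {n m : ℕ} (hnm : n < m) (A : Matrix (Fin n) (Fin m) ℝ)
    (hcols : UnitCols A) (M : ℝ) (hM : LeftInvBound A M)
    (s : Fin m → ℝ) (hs : A.mulVec s = 0) (α : ℝ) (hα : 0 < α)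
    (hcard : (Finset.univ.filter fun i => α < |s i|).card ≤ n) :
    vnorm s < (M + 1) * m * α := by
  set T := Finset.univ.filter fun i => α < |s i|
  set g := T.orderEmbOfFin rfl
  obtain ⟨L, hL, hLM⟩ := hM T.card hcard g g.injective
  have hgT : Set.range g = ↑T := T.range_orderEmbOfFin rfl
  set y := (Set.range g)ᶜ.indicator s
  have hy : ∀ j, |y j| ≤ α := fun j => by
    simp only [y, hgT]
    by_cases hj : j ∈ T
    · rw [Set.indicator_of_notMem (by simpa using hj), abs_zero]
      exact hα.le
    · rw [Set.indicator_of_mem (by simpa using hj)]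
      simpa [T] using hj
  have hAy : vnorm (A *ᵥ y) ≤ m * α := (vnorm_mulVec_le_sum_abs hcols y).trans <| by
    simpa using Finset.sum_le_card_nsmul univ _ α fun j _ => hy j
  have hm : (1 : ℝ) < m := by exact_mod_cast lt_of_le_of_lt (hcols.pos_rows ⟨0, by omega⟩) hnm
  calc vnorm s = vnorm ((Set.range g).indicator s + y) := by rw [Set.indicator_self_add_compl]
    _ ≤ vnorm (s ∘ g) + vnorm y := by
        rw [← vnorm_indicator_range g.injective]; exact vnorm_add_le _ _
    _ ≤ M * (m * α) + √m * α := add_le_add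
        ((vnorm_comp_le_of_mulVec_eq_zero hs g.injective hL).trans
          (mul_le_mul hLM hAy (vnorm_nonneg _) hM.nonneg))
        (vnorm_le_sqrt_mul hα.le hy)
    _ < (M + 1) * m * α := by
        nlinarith [Real.sqrt_lt_self_iff.2 hm]

theorem stmt1 {n m : ℕ} (hnm : n < m) (A : Matrix (Fin n) (Fin m) ℝ)
    (hcols : UnitCols A) (hURP : URP A) (M : ℝ) (hM : LeftInvBound A M)
    (s : Fin m → ℝ) (hs : A.mulVec s = 0) (α : ℝ) (hα : 0 < α)
    (hcard : (Finset.univ.filter fun i => α < |s i|).card ≤ n) :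
    vnorm s < (M + 1) * m * α :=
  stmt1_general hnm A hcols M hM s hs α hα hcard
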